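/- arXiv:1802.06603 — 5 statements merged into one kernel-verified Lean document; each statement's English description precedes it below -/
import Mathlib

section
/- Every satisfiable integer problem has a smallest solution: if an integer problem has a solution, then there is a solution ψ₀ such that ψ₀(x) ≤ ψ(x) for every solution ψ and every variable x. -/
/-- An integer constraint over a set `X` of integer variables: either
`x + k ≤? y + l`, or `x + k ≤? l`, or `k ≤? y + l`, with `k, l ∈ ℕ`. -/
inductive IntConstraint (X : Type) : Type
  | vv : X → ℕ → X → ℕ → IntConstraint X   -- x + k ≤? y + l
  | vc : X → ℕ → ℕ → IntConstraint X       -- x + k ≤? l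
  | cv : ℕ → X → ℕ → IntConstraint X       -- k ≤? y + l

/-- A valuation `ψ : X → ℕ` satisfies a constraint. -/
def IntConstraint.holds {X : Type} (ψ : X → ℕ) : IntConstraint X → Prop
  | .vv x k y l => ψ x + k ≤ ψ y + l
  | .vc x k l => ψ x + k ≤ l
  | .cv k y l => k ≤ ψ y + l

/-- Every satisfiable integer problem has a smallest solution. -/
theorem satisfiable_int_problem_has_smallest_solution
    (X : Type) [Fintype X] (P : Finset (IntConstraint X))
    (hsat : ∃ ψ : X → ℕ, ∀ c ∈ P, c.holds ψ) :
    ∃ ψ₀ : X → ℕ, (∀ c ∈ P, c.holds ψ₀) ∧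
      ∀ ψ : X → ℕ, (∀ c ∈ P, c.holds ψ) → ∀ x, ψ₀ x ≤ ψ x := by
  classical
  -- solutions are closed under pointwise min
  have hmin : ∀ ψ ψ' : X → ℕ, (∀ c ∈ P, c.holds ψ) → (∀ c ∈ P, c.holds ψ') →
      ∀ c ∈ P, c.holds (fun x => min (ψ x) (ψ' x)) := by
    intro ψ ψ' h h' c hc
    have h1 := h c hc
    have h2 := h' c hc
    cases c with
    | vv x k y l => simp only [IntConstraint.holds] at *; omega
    | vc x k l => simp only [IntConstraint.holds] at *; omega
    | cv k y l => simp only [IntConstraint.holds] at *; omega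
  -- minimize the total sum over solutions
  set S : Set ℕ := {n | ∃ ψ : X → ℕ, (∀ c ∈ P, c.holds ψ) ∧ ∑ x, ψ x = n} with hS
  have hSne : S.Nonempty := by
    obtain ⟨ψ, hψ⟩ := hsat
    exact ⟨∑ x, ψ x, ψ, hψ, rfl⟩
  obtain ⟨ψ₀, hψ₀, hsum⟩ : ∃ ψ₀ : X → ℕ, (∀ c ∈ P, c.holds ψ₀) ∧ ∑ x, ψ₀ x = sInf S :=
    Nat.sInf_mem hSne
  refine ⟨ψ₀, hψ₀, ?_⟩
  intro ψ hψ x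
  have hm := hmin ψ₀ ψ hψ₀ hψ
  have hmem : (∑ x, min (ψ₀ x) (ψ x)) ∈ S := ⟨_, hm, rfl⟩
  have hle : sInf S ≤ ∑ x, min (ψ₀ x) (ψ x) := Nat.sInf_le hmem
  have hge : ∑ x, min (ψ₀ x) (ψ x) ≤ ∑ x, ψ₀ x :=
    Finset.sum_le_sum fun i _ => min_le_left _ _
  have heq : ∑ x, min (ψ₀ x) (ψ x) = ∑ x, ψ₀ x := le_antisymm hge (hsum ▸ hle)
  have := (Finset.sum_eq_sum_iff_of_le (fun i _ => min_le_left (ψ₀ i) (ψ i))).mp heq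
    x (Finset.mem_univ x)
  omega
end

section
/- If the reduction relation → is finitely branching and Q is a nonempty set of computability predicates that is well-ordered with respect to inclusion, then the union ⋃Q is a computability predicate. -/
/-- `t` is strongly normalizing for `r` if it is accessible for the converse of `r`. -/
def SN {Λ : Type} (r : Λ → Λ → Prop) : Set Λ := {t | Acc (fun a b => r b a) t}

/-- `S` is a computability predicate (for reduction `r` and neutral terms `N`):
it contains only strongly normalizing elements, it is closed under reduction,
and it contains every neutral element all of whose reducts belong to it. -/
def IsCP {Λ : Type} (r : Λ → Λ → Prop) (N : Set Λ) (S : Set Λ) : Prop :=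
  S ⊆ SN r ∧ (∀ t ∈ S, ∀ u, r t u → u ∈ S) ∧ (∀ t ∈ N, (∀ u, r t u → u ∈ S) → t ∈ S)

/-- If the reduction relation is finitely branching and `Q` is a nonempty set of
computability predicates well-ordered with respect to inclusion, then `⋃ Q` is a
computability predicate. -/
theorem wellOrdered_union_isCP
    (Λ : Type) (r : Λ → Λ → Prop) (N : Set Λ)
    (hfb : ∀ t, {u | r t u}.Finite)
    (Q : Set (Set Λ)) (hne : Q.Nonempty)
    (hcp : ∀ S ∈ Q, IsCP r N S)
    (hwo : IsWellOrder Q (fun A B => (A : Set Λ) ⊂ (B : Set Λ))) :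
    IsCP r N (⋃₀ Q) := by
  have htot : ∀ A ∈ Q, ∀ B ∈ Q, A ⊆ B ∨ B ⊆ A := by
    intro A hA B hB
    rcases (or_iff_not_imp_left.2 fun h1 => or_iff_not_imp_right.2 fun h2 => hwo.trichotomous ⟨A, hA⟩ ⟨B, hB⟩ h1 h2) with h | h | h
    · exact Or.inl h.subset
    · exact Or.inl (by injection h with h'; exact h' ▸ subset_rfl)
    · exact Or.inr h.subset
  -- a finite subset of the union is contained in a single member of Q
  have key : ∀ (F : Set Λ), F.Finite → (∀ u ∈ F, u ∈ ⋃₀ Q) → ∃ S ∈ Q, F ⊆ S := by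
    intro F hF
    refine Set.Finite.induction_on F hF ?_ ?_
    · intro _
      obtain ⟨S, hS⟩ := hne
      exact ⟨S, hS, Set.empty_subset _⟩
    · intro a F' _ _ ih hall
      obtain ⟨S, hSQ, hFS⟩ := ih (fun u hu => hall u (Set.mem_insert_of_mem _ hu))
      obtain ⟨T, hTQ, haT⟩ := hall a (Set.mem_insert _ _)
      rcases htot S hSQ T hTQ with h | h
      · exact ⟨T, hTQ, Set.insert_subset haT (hFS.trans h)⟩
      · exact ⟨S, hSQ, Set.insert_subset (h haT) hFS⟩
  refine ⟨?_, ?_, ?_⟩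
  · intro t ht
    obtain ⟨S, hSQ, htS⟩ := ht
    exact (hcp S hSQ).1 htS
  · intro t ht u hru
    obtain ⟨S, hSQ, htS⟩ := ht
    exact ⟨S, hSQ, (hcp S hSQ).2.1 t htS u hru⟩
  · intro t htN hred
    obtain ⟨S, hSQ, hsub⟩ := key {u | r t u} (hfb t) (fun u hu => hred u hu)
    exact ⟨S, hSQ, (hcp S hSQ).2.2 t htN (fun u hru => hsub hru)⟩
end

section
/- The collection of computability predicates, partially ordered by inclusion, is a complete lattice: SN is itself a computability predicate and is the greatest one, and the intersection of any nonempty family of computability predicates is again a computability predicate (giving greatest lower bounds, and hence least upper bounds as well). -/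
/-- The computability predicates ordered by inclusion form a complete lattice:
`SN` is a computability predicate and is the greatest one, and the intersection
of any nonempty family of computability predicates is a computability predicate
(giving greatest lower bounds, and hence least upper bounds as well). -/
theorem computability_predicates_complete_lattice
    (Λ : Type) (r : Λ → Λ → Prop) (N : Set Λ) :
    IsCP r N (SN r) ∧
    (∀ S : Set Λ, IsCP r N S → S ⊆ SN r) ∧
    (∀ Q : Set (Set Λ), Q.Nonempty → (∀ S ∈ Q, IsCP r N S) → IsCP r N (⋂₀ Q)) := by
  refine ⟨⟨fun t ht => ht, fun t ht u htu => ht.inv htu, fun t _ h => Acc.intro t fun u hu => h u hu⟩, fun S hS => hS.1, fun Q ⟨S₀, hS₀⟩ hQ => ?_⟩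
  refine ⟨fun t ht => (hQ S₀ hS₀).1 (ht S₀ hS₀), fun t ht u htu S hS => (hQ S hS).2.1 t (ht S hS) u htu, fun t htN h S hS => (hQ S hS).2.2 t htN fun u hu => h u hu S hS⟩
end

section
/- Generality of substitutions in the successor algebra can always be witnessed by a renaming: for substitutions φ, ψ : V → ōA, φ ⊴ ψ holds if and only if there exists a substitution ρ all of whose values lie in V ∪ C ∪ {∞} (viewing variables and constants as elements of A) such that (αφ)ρ ≤∞ αψ for every variable α. -/
/-- The successor size algebra: free term algebra over variables `V`,
constants `C` and one unary symbol `succ`. -/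
inductive SizeTerm (V C : Type) : Type
  | var : V → SizeTerm V C
  | const : C → SizeTerm V C
  | succ : SizeTerm V C → SizeTerm V C

namespace SizeTerm

variable {V C : Type}

/-- The strict order `⊏`: transitive closure of the relation relating `a` to `succ a`. -/
def slt (a b : SizeTerm V C) : Prop :=
  Relation.TransGen (fun x y => y = SizeTerm.succ x) a b

/-- The order `⊑`: reflexive closure of `⊏`. -/
def sle (a b : SizeTerm V C) : Prop := a = b ∨ slt a b

end SizeTerm

/-- The top-extension `ōA` of the successor algebra: `none` stands for `∞`. -/
abbrev OTerm (V C : Type) : Type := Option (SizeTerm V C)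

variable {V C : Type}

/-- `a ≤∞ b` iff `b = ∞`, or both are finite and `a ⊑ b`. -/
def leInf (x y : OTerm V C) : Prop :=
  y = none ∨ ∃ a b, x = some a ∧ y = some b ∧ SizeTerm.sle a b

/-- Action of a substitution on a finite size expression: the result is `∞`
as soon as some variable is mapped to `∞`. -/
def subst (φ : V → OTerm V C) : SizeTerm V C → OTerm V C
  | .var v => φ v
  | .const c => some (.const c)
  | .succ a => Option.map SizeTerm.succ (subst φ a)

/-- Action of a substitution on the top-extension: `∞φ = ∞`. -/
def substInf (φ : V → OTerm V C) : OTerm V C → OTerm V C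
  | none => none
  | some a => subst φ a

/-- `φ` is more general than `ψ`, written `φ ⊴ ψ`. -/
def moreGeneral (φ ψ : V → OTerm V C) : Prop :=
  ∃ θ : V → OTerm V C, ∀ α, leInf (substInf θ (φ α)) (ψ α)

/-- A value in `V ∪ C ∪ {∞}` (variables and constants viewed as elements of `A`). -/
def IsRenamingValue (x : OTerm V C) : Prop :=
  x = none ∨ (∃ β, x = some (.var β)) ∨ (∃ c, x = some (.const c))

namespace SizeTerm

lemma sle_trans {a b c : SizeTerm V C} (h1 : sle a b) (h2 : sle b c) : sle a c := by
  rcases h1 with rfl | h1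
  · exact h2
  rcases h2 with rfl | h2
  · exact Or.inr h1
  · exact Or.inr (h1.trans h2)

lemma sle_succ_self (a : SizeTerm V C) : sle a (succ a) :=
  Or.inr (Relation.TransGen.single rfl)

lemma sle_succ_mono {a b : SizeTerm V C} (h : sle a b) : sle (succ a) (succ b) := by
  rcases h with rfl | h
  · exact Or.inl rfl
  · exact Or.inr (Relation.TransGen.lift (r := fun x y => y = SizeTerm.succ x) (p := fun x y => y = SizeTerm.succ x) succ (fun a b hab => by rw [hab]) _ _ h)

/-- The base generator of a term. -/
def base : SizeTerm V C → SizeTerm V C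
  | .var v => .var v
  | .const c => .const c
  | .succ a => base a

lemma sle_base (t : SizeTerm V C) : sle (base t) t := by
  induction t with
  | var v => exact Or.inl rfl
  | const c => exact Or.inl rfl
  | succ a ih => exact sle_trans ih (sle_succ_self a)

lemma base_is_gen (t : SizeTerm V C) :
    (∃ β, base t = var β) ∨ (∃ c, base t = const c) := by
  induction t with
  | var v => exact Or.inl ⟨v, rfl⟩
  | const c => exact Or.inr ⟨c, rfl⟩
  | succ a ih => exact ih

end SizeTerm

lemma leInf_trans {x y z : OTerm V C} (h1 : leInf x y) (h2 : leInf y z) :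
    leInf x z := by
  rcases h2 with rfl | ⟨a, b, rfl, rfl, hab⟩
  · exact Or.inl rfl
  rcases h1 with h | ⟨a', b', rfl, hb', ha'b'⟩
  · cases h
  · cases Option.some.inj hb'
    exact Or.inr ⟨a', b, rfl, rfl, SizeTerm.sle_trans ha'b' hab⟩

lemma subst_mono {ρ θ : V → OTerm V C} (h : ∀ β, leInf (ρ β) (θ β))
    (a : SizeTerm V C) : leInf (subst ρ a) (subst θ a) := by
  induction a with
  | var v => exact h v
  | const c => exact Or.inr ⟨_, _, rfl, rfl, Or.inl rfl⟩
  | succ a ih =>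
    rcases ih with hn | ⟨a', b', ha', hb', hab⟩
    · exact Or.inl (by simp [subst, hn])
    · simp only [subst, ha', hb', Option.map_some]
      exact Or.inr ⟨_, _, rfl, rfl, SizeTerm.sle_succ_mono hab⟩

lemma substInf_mono {ρ θ : V → OTerm V C} (h : ∀ β, leInf (ρ β) (θ β))
    (x : OTerm V C) : leInf (substInf ρ x) (substInf θ x) := by
  cases x with
  | none => exact Or.inl rfl
  | some a => exact subst_mono h a

/-- Generality of substitutions in the successor algebra can always be witnessed
by a renaming: `φ ⊴ ψ` iff there is a substitution `ρ` whose values all lie in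
`V ∪ C ∪ {∞}` such that `(αφ)ρ ≤∞ αψ` for every variable `α`. -/
theorem moreGeneral_iff_witnessed_by_renaming
    (V C : Type) (φ ψ : V → OTerm V C) :
    moreGeneral φ ψ ↔
    ∃ ρ : V → OTerm V C, (∀ α, IsRenamingValue (ρ α)) ∧
      ∀ α, leInf (substInf ρ (φ α)) (ψ α) := by
  constructor
  · rintro ⟨θ, hθ⟩
    refine ⟨fun β => Option.map SizeTerm.base (θ β), ?_, ?_⟩
    · intro α
      cases hθα : θ α with
      | none => exact Or.inl (by simp [hθα])
      | some t =>
        rcases SizeTerm.base_is_gen t with ⟨β, hβ⟩ | ⟨c, hc⟩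
        · exact Or.inr (Or.inl ⟨β, by simp [hθα, hβ]⟩)
        · exact Or.inr (Or.inr ⟨c, by simp [hθα, hc]⟩)
    · intro α
      refine leInf_trans (substInf_mono (fun β => ?_) (φ α)) (hθ α)
      cases hθβ : θ β with
      | none => exact Or.inl (by simp [hθβ])
      | some t =>
        exact Or.inr ⟨_, _, by simp [hθβ], rfl, SizeTerm.sle_base t⟩
  · rintro ⟨ρ, _, h⟩
    exact ⟨ρ, h⟩
end

section
/- Equivalent substitutions in the successor algebra differ by a permutation of the variables: if φ₁, φ₂ : V → ōA are substitutions with finite domain, then φ₂ ≡ φ₁ holds if and only if there is a permutation ξ of V such that αφ₂ = (αφ₁)ξ̂ for every variable α, where ξ̂ is the substitution mapping each variable β to ξ(β). -/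
variable {V C : Type}

/-- `φ` has finite domain: it is the identity outside a finite set of variables. -/
def FiniteDomain (φ : V → OTerm V C) : Prop :=
  {α : V | φ α ≠ some (.var α)}.Finite

/-! ### Auxiliary material -/

namespace SizeTerm

/-- Number of `succ`s at the root. -/
def depth : SizeTerm V C → ℕ
  | .var _ => 0
  | .const _ => 0
  | .succ a => depth a + 1

/-- The head of a term (a variable or a constant, as a term). -/
def core : SizeTerm V C → SizeTerm V C
  | .var v => .var v
  | .const c => .const c
  | .succ a => core a

lemma iterate_core (a : SizeTerm V C) : SizeTerm.succ^[depth a] (core a) = a := by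
  induction a with
  | var v => rfl
  | const c => rfl
  | succ a ih => rw [depth, core, Function.iterate_succ_apply', ih]

lemma core_cases (a : SizeTerm V C) : (∃ v, core a = .var v) ∨ ∃ c, core a = .const c := by
  induction a with
  | var v => exact Or.inl ⟨v, rfl⟩
  | const c => exact Or.inr ⟨c, rfl⟩
  | succ a ih => exact ih

lemma succ_injective : Function.Injective (SizeTerm.succ : SizeTerm V C → SizeTerm V C) :=
  fun a b h => by cases h; rfl

lemma iterate_succ_injective (k : ℕ) :
    Function.Injective (SizeTerm.succ^[k] : SizeTerm V C → SizeTerm V C) :=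
  Function.Injective.iterate succ_injective k

lemma depth_iterate (k : ℕ) (a : SizeTerm V C) :
    depth (SizeTerm.succ^[k] a) = depth a + k := by
  induction k with
  | zero => rfl
  | succ k ih => rw [Function.iterate_succ_apply', depth, ih]; omega

lemma core_iterate (k : ℕ) (a : SizeTerm V C) :
    core (SizeTerm.succ^[k] a) = core a := by
  induction k with
  | zero => rfl
  | succ k ih => rw [Function.iterate_succ_apply', core, ih]

lemma core_of_depth_zero {a : SizeTerm V C} (h : depth a = 0) : core a = a := by
  cases a with
  | var v => rfl
  | const c => rfl
  | succ a => simp [depth] at h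

lemma slt_exists {a b : SizeTerm V C} (h : slt a b) :
    ∃ k, b = SizeTerm.succ^[k + 1] a := by
  induction h with
  | single h => exact ⟨0, h⟩
  | tail _ h ih =>
      obtain ⟨k, rfl⟩ := ih
      exact ⟨k + 1, by rw [h]; exact (Function.iterate_succ_apply' _ _ _).symm⟩

lemma sle_exists {a b : SizeTerm V C} (h : sle a b) :
    ∃ k, b = SizeTerm.succ^[k] a := by
  rcases h with rfl | h
  · exact ⟨0, rfl⟩
  · obtain ⟨k, rfl⟩ := slt_exists h
    exact ⟨k + 1, rfl⟩

lemma sle_depth_le {a b : SizeTerm V C} (h : sle a b) : depth a ≤ depth b := by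
  obtain ⟨k, rfl⟩ := sle_exists h
  rw [depth_iterate]; omega

lemma sle_eq_of_depth {a b : SizeTerm V C} (h : sle a b) (hd : depth b ≤ depth a) :
    a = b := by
  obtain ⟨k, rfl⟩ := sle_exists h
  rw [depth_iterate] at hd
  have : k = 0 := by omega
  subst this; rfl

/-- Renaming of variables in a term. -/
def rename (ξ : V → V) : SizeTerm V C → SizeTerm V C
  | .var v => .var (ξ v)
  | .const c => .const c
  | .succ a => .succ (rename ξ a)

lemma rename_rename (ξ τ : V → V) (a : SizeTerm V C) :
    rename τ (rename ξ a) = rename (fun v => τ (ξ v)) a := by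
  induction a with
  | var v => rfl
  | const c => rfl
  | succ a ih => simp [rename, ih]

lemma rename_id {ξ : V → V} (h : ∀ v, ξ v = v) (a : SizeTerm V C) :
    rename ξ a = a := by
  induction a with
  | var v => simp [rename, h]
  | const c => rfl
  | succ a ih => simp [rename, ih]

lemma rename_iterate (ξ : V → V) (k : ℕ) (a : SizeTerm V C) :
    rename ξ (SizeTerm.succ^[k] a) = SizeTerm.succ^[k] (rename ξ a) := by
  induction k with
  | zero => rfl
  | succ k ih => rw [Function.iterate_succ_apply', Function.iterate_succ_apply', rename, ih]

end SizeTerm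

lemma subst_rename (ξ : V → V) (a : SizeTerm V C) :
    subst (fun β => some (.var (ξ β))) a = some (SizeTerm.rename ξ a) := by
  induction a with
  | var v => rfl
  | const c => rfl
  | succ a ih => simp [subst, SizeTerm.rename, ih]

lemma subst_map_iterate (θ : V → OTerm V C) (k : ℕ) (a : SizeTerm V C) :
    subst θ (SizeTerm.succ^[k] a) = Option.map (SizeTerm.succ^[k]) (subst θ a) := by
  induction k with
  | zero => simp
  | succ k ih =>
      rw [Function.iterate_succ_apply', subst, ih, Option.map_map]
      congr 1
      funext x
      exact (Function.iterate_succ_apply' _ _ _).symm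

lemma subst_core (θ : V → OTerm V C) (a : SizeTerm V C) :
    subst θ a = Option.map (SizeTerm.succ^[SizeTerm.depth a]) (subst θ (SizeTerm.core a)) := by
  conv_lhs => rw [← SizeTerm.iterate_core a]
  exact subst_map_iterate θ _ _

lemma depth_subst {θ : V → OTerm V C} {a b : SizeTerm V C} (h : subst θ a = some b) :
    SizeTerm.depth a ≤ SizeTerm.depth b := by
  rw [subst_core] at h
  obtain ⟨t, _, rfl⟩ := Option.map_eq_some_iff.mp h
  rw [SizeTerm.depth_iterate]; omega

lemma subst_core_eq {θ : V → OTerm V C} {a b : SizeTerm V C} (h : subst θ a = some b)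
    (hd : SizeTerm.depth a = SizeTerm.depth b) :
    subst θ (SizeTerm.core a) = some (SizeTerm.core b) := by
  rw [subst_core] at h
  obtain ⟨t, ht, hb⟩ := Option.map_eq_some_iff.mp h
  have hdt : SizeTerm.depth t = 0 := by
    have := congrArg SizeTerm.depth hb
    rw [SizeTerm.depth_iterate] at this
    omega
  have hcore : SizeTerm.core b = t := by
    rw [← hb, SizeTerm.core_iterate, SizeTerm.core_of_depth_zero hdt]
  rw [ht, hcore]

/-- The key local analysis: if `θ a₂ ⊑ a₁` and `θ' a₁ ⊑ a₂` then both substitutions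
act exactly (no slack), the depths agree, and the heads correspond. -/
lemma key_step {θ θ' : V → OTerm V C} {a₁ a₂ : SizeTerm V C}
    (h1 : leInf (subst θ a₂) (some a₁)) (h2 : leInf (subst θ' a₁) (some a₂)) :
    subst θ (SizeTerm.core a₂) = some (SizeTerm.core a₁) ∧
    subst θ' (SizeTerm.core a₁) = some (SizeTerm.core a₂) ∧
    SizeTerm.depth a₁ = SizeTerm.depth a₂ := by
  rcases h1 with h | ⟨b, a₁', hb, ha₁, hba⟩
  · exact absurd h (by simp)
  rcases h2 with h | ⟨c, a₂', hc, ha₂, hca⟩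
  · exact absurd h (by simp)
  obtain rfl : a₁ = a₁' := by injection ha₁
  obtain rfl : a₂ = a₂' := by injection ha₂
  have d1 : SizeTerm.depth a₂ ≤ SizeTerm.depth b := depth_subst hb
  have d2 : SizeTerm.depth b ≤ SizeTerm.depth a₁ := SizeTerm.sle_depth_le hba
  have d3 : SizeTerm.depth a₁ ≤ SizeTerm.depth c := depth_subst hc
  have d4 : SizeTerm.depth c ≤ SizeTerm.depth a₂ := SizeTerm.sle_depth_le hca
  have hd : SizeTerm.depth a₁ = SizeTerm.depth a₂ := by omega
  have hb' : subst θ a₂ = some a₁ := by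
    rw [hb]
    exact congrArg some (SizeTerm.sle_eq_of_depth hba (by omega))
  have hc' : subst θ' a₁ = some a₂ := by
    rw [hc]
    exact congrArg some (SizeTerm.sle_eq_of_depth hca (by omega))
  exact ⟨subst_core_eq hb' hd.symm, subst_core_eq hc' hd, hd⟩

/-- Extending a partial bijection which is the identity outside a finite set
to a permutation. -/
lemma exists_perm_of_good {V : Type} (D : Set V) (hD : D.Finite) (Good : V → V → Prop)
    (hfun : ∀ {w v v'}, Good w v → Good w v' → v = v')
    (hinj : ∀ {w w' v}, Good w v → Good w' v → w = w')
    (hid : ∀ w, w ∉ D → Good w w) :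
    ∃ ξ : Equiv.Perm V, ∀ w v, Good w v → ξ w = v := by
  classical
  haveI : Fintype ↥D := hD.fintype
  have mem₂ : ∀ {w v}, Good w v → w ∈ D → v ∈ D := by
    intro w v hg hw
    by_contra hv
    exact hv (hinj hg (hid v hv) ▸ hw)
  have mem₁ : ∀ {w v}, Good w v → v ∈ D → w ∈ D := by
    intro w v hg hv
    by_contra hw
    exact hw (hfun hg (hid w hw) ▸ hv)
  let P₁ : ↥D → Prop := fun x => ∃ v, Good x v
  let P₂ : ↥D → Prop := fun y => ∃ w, Good w y
  let e : { x : ↥D // P₁ x } ≃ { y : ↥D // P₂ y } :=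
    { toFun := fun x =>
        ⟨⟨Classical.choose x.2, mem₂ (Classical.choose_spec x.2) x.1.2⟩,
          ⟨x.1.1, Classical.choose_spec x.2⟩⟩
      invFun := fun y =>
        ⟨⟨Classical.choose y.2, mem₁ (Classical.choose_spec y.2) y.1.2⟩,
          ⟨y.1.1, Classical.choose_spec y.2⟩⟩
      left_inv := by
        rintro ⟨⟨w, hw⟩, hP⟩
        have h1 : Good w (Classical.choose hP) := Classical.choose_spec hP
        apply Subtype.ext; apply Subtype.ext
        exact hinj (Classical.choose_spec (⟨w, h1⟩ : ∃ u, Good u (Classical.choose hP))) h1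
      right_inv := by
        rintro ⟨⟨v, hv⟩, hP⟩
        have h1 : Good (Classical.choose hP) v := Classical.choose_spec hP
        apply Subtype.ext; apply Subtype.ext
        exact hfun (Classical.choose_spec (⟨v, h1⟩ : ∃ u, Good (Classical.choose hP) u)) h1 }
  let π : Equiv.Perm ↥D := e.extendSubtype
  refine ⟨Equiv.Perm.subtypeCongr π (Equiv.refl { x : V // x ∉ D }), ?_⟩
  intro w v hg
  by_cases hw : w ∈ D
  · have hP : P₁ ⟨w, hw⟩ := ⟨v, hg⟩
    rw [Equiv.Perm.subtypeCongr.left_apply _ _ hw]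
    have : π ⟨w, hw⟩ = e ⟨⟨w, hw⟩, hP⟩ := e.extendSubtype_apply_of_mem _ hP
    rw [this]
    exact hfun (Classical.choose_spec hP) hg
  · have hv : v = w := hfun hg (hid w hw)
    subst hv
    exact Equiv.Perm.subtypeCongr.right_apply _ _ hw

/-- Equivalent substitutions in the successor algebra differ by a permutation
of the variables: for substitutions `φ₁, φ₂` with finite domain, `φ₂ ≡ φ₁`
(i.e. `φ₂ ⊴ φ₁` and `φ₁ ⊴ φ₂`) iff `αφ₂ = (αφ₁)ξ̂` for some permutation `ξ`
of the variables, `ξ̂` being the substitution induced by `ξ`. -/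
theorem equiv_substitutions_iff_perm
    (V C : Type) (φ₁ φ₂ : V → OTerm V C)
    (h₁ : FiniteDomain φ₁) (h₂ : FiniteDomain φ₂) :
    (moreGeneral φ₂ φ₁ ∧ moreGeneral φ₁ φ₂) ↔
    ∃ ξ : Equiv.Perm V, ∀ α, φ₂ α = substInf (fun β => some (.var (ξ β))) (φ₁ α) := by
  constructor
  · rintro ⟨⟨θ, hθ⟩, ⟨θ', hθ'⟩⟩
    -- the finite set outside of which both substitutions are the identity
    set D : Set V := {α | φ₁ α ≠ some (.var α)} ∪ {α | φ₂ α ≠ some (.var α)} with hDdef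
    have hD : D.Finite := h₁.union h₂
    -- the per-variable analysis
    have main : ∀ α a₁, φ₁ α = some a₁ → ∃ a₂, φ₂ α = some a₂ ∧
        subst θ (SizeTerm.core a₂) = some (SizeTerm.core a₁) ∧
        subst θ' (SizeTerm.core a₁) = some (SizeTerm.core a₂) ∧
        SizeTerm.depth a₁ = SizeTerm.depth a₂ := by
      intro α a₁ ha₁
      have H1 := hθ α
      have H2 := hθ' α
      rw [ha₁] at H1 H2
      obtain ⟨a₂, ha₂⟩ : ∃ a₂, φ₂ α = some a₂ := by
        cases hφ₂ : φ₂ α with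
        | none =>
            rw [hφ₂] at H1
            rcases H1 with h | ⟨a, b, ha, hb, _⟩
            · exact absurd h (by simp)
            · exact absurd ha (by simp [substInf])
        | some a₂ => exact ⟨a₂, rfl⟩
      rw [ha₂] at H1 H2
      exact ⟨a₂, ha₂, key_step H1 H2⟩
    -- noneness is reflected
    have hnone : ∀ α, φ₁ α = none → φ₂ α = none := by
      intro α hα
      have H2 := hθ' α
      rw [hα] at H2
      rcases H2 with h | ⟨a, b, ha, hb, _⟩
      · exact h
      · exact absurd ha (by simp [substInf])
    -- the partial bijection between head variables
    set Good : V → V → Prop :=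
      fun w v => θ' w = some (.var v) ∧ θ v = some (.var w) with hGood
    have hfun : ∀ {w v v'}, Good w v → Good w v' → v = v' := by
      rintro w v v' ⟨h, -⟩ ⟨h', -⟩
      rw [h] at h'
      simpa using h'
    have hinj : ∀ {w w' v}, Good w v → Good w' v → w = w' := by
      rintro w w' v ⟨-, h⟩ ⟨-, h'⟩
      rw [h] at h'
      simpa using h'
    have hid : ∀ w, w ∉ D → Good w w := by
      intro w hw
      rw [hDdef] at hw
      simp only [Set.mem_union, Set.mem_setOf_eq, not_or, not_not] at hw
      obtain ⟨hw₁, hw₂⟩ := hw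
      obtain ⟨a₂, ha₂, hk₁, hk₂, -⟩ := main w _ hw₁
      rw [hw₂] at ha₂
      obtain rfl : SizeTerm.var w = a₂ := by injection ha₂
      exact ⟨hk₂, hk₁⟩
    obtain ⟨ξ, hξ⟩ := exists_perm_of_good D hD Good hfun hinj hid
    refine ⟨ξ, ?_⟩
    intro α
    cases hα : φ₁ α with
    | none => exact hnone α hα
    | some a₁ =>
        obtain ⟨a₂, ha₂, hk₁, hk₂, hd⟩ := main α a₁ hα
        rw [ha₂]
        show some a₂ = subst (fun β => some (.var (ξ β))) a₁
        rw [subst_rename]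
        refine congrArg some ?_
        -- compute the renaming on the canonical form of a₁
        rcases SizeTerm.core_cases a₁ with ⟨w, hw⟩ | ⟨c, hc⟩
        · rcases SizeTerm.core_cases a₂ with ⟨v, hv⟩ | ⟨c, hc⟩
          · have hg : Good w v := by
              constructor
              · rw [← hv, ← hk₂, hw]; rfl
              · rw [← hw, ← hk₁, hv]; rfl
            have hxw : ξ w = v := hξ w v hg
            calc a₂ = SizeTerm.succ^[SizeTerm.depth a₂] (SizeTerm.core a₂) :=
                  (SizeTerm.iterate_core a₂).symm
              _ = SizeTerm.succ^[SizeTerm.depth a₁] (SizeTerm.rename ξ (SizeTerm.core a₁)) := by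
                  rw [hv, hw, hd]
                  simp [SizeTerm.rename, hxw]
              _ = SizeTerm.rename ξ (SizeTerm.succ^[SizeTerm.depth a₁] (SizeTerm.core a₁)) :=
                  (SizeTerm.rename_iterate _ _ _).symm
              _ = SizeTerm.rename ξ a₁ := by rw [SizeTerm.iterate_core]
          · -- impossible: a const head would be mapped to a var head
            rw [hc] at hk₁
            rw [hw] at hk₁
            simp only [subst] at hk₁
            exact absurd hk₁ (by simp)
        · have hcore₂ : SizeTerm.core a₂ = .const c := by
            rw [hc] at hk₂
            simp only [subst] at hk₂
            injection hk₂.symm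
          calc a₂ = SizeTerm.succ^[SizeTerm.depth a₂] (SizeTerm.core a₂) :=
                (SizeTerm.iterate_core a₂).symm
            _ = SizeTerm.succ^[SizeTerm.depth a₁] (SizeTerm.rename ξ (SizeTerm.core a₁)) := by
                rw [hcore₂, hc, hd]; rfl
            _ = SizeTerm.rename ξ (SizeTerm.succ^[SizeTerm.depth a₁] (SizeTerm.core a₁)) :=
                (SizeTerm.rename_iterate _ _ _).symm
            _ = SizeTerm.rename ξ a₁ := by rw [SizeTerm.iterate_core]
  · rintro ⟨ξ, hξ⟩
    have hcomp : ∀ x : OTerm V C,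
        substInf (fun β => some (.var (ξ.symm β))) (substInf (fun β => some (.var (ξ β))) x)
          = x := by
      intro x
      cases x with
      | none => rfl
      | some a =>
          show substInf _ (subst _ a) = some a
          rw [subst_rename]
          show subst _ (SizeTerm.rename ξ a) = some a
          rw [subst_rename, SizeTerm.rename_rename]
          exact congrArg some (SizeTerm.rename_id (fun v => ξ.symm_apply_apply v) a)
    have hrefl : ∀ x : OTerm V C, leInf x x := by
      intro x
      cases x with
      | none => exact Or.inl rfl
      | some a => exact Or.inr ⟨a, a, rfl, rfl, Or.inl rfl⟩
    constructor
    · refine ⟨fun β => some (.var (ξ.symm β)), fun α => ?_⟩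
      rw [hξ α, hcomp (φ₁ α)]
      exact hrefl _
    · refine ⟨fun β => some (.var (ξ β)), fun α => ?_⟩
      rw [← hξ α]
      exact hrefl _
end
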